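/- arXiv:2501.13737 — 7 statements merged into one kernel-verified Lean document; each statement's English description precedes it below -/
import Mathlib

section
/- Let n ≥ 1 and let x⃗ = (x₁, …, xₙ) ∈ ℝⁿ be a nonincreasing vector such that x₁ = x₂ = ⋯ = x_m > x_{m+1} ≥ ⋯ ≥ xₙ for some 1 ≤ m < n. Then for every α > 0, |B_α(x⃗) − x₁| ≤ (n/m) · e^{−α(x₁ − x_{m+1})} · ‖x⃗‖, where ‖·‖ is the Euclidean norm. -/
/-!
Write `c - B_α(x) = (∑ i, (c - xᵢ) e^{α xᵢ}) / ∑ i, e^{α xᵢ}` with `c = x₁`. In the numerator the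
terms of the `m` maximisers vanish and every other weight is at most `e^{α x_{m+1}}`, while the
denominator is at least `m e^{α x₁}`. Finally `∑ i, (x₁ - xᵢ) ≤ n ‖x‖` by Cauchy–Schwarz against
the vector `n e₁ - 𝟙`, whose norm is `√(n² - n)`.
-/

/-- The Boltzmann operator `B_α(x) = (∑ i, x i · e^{α x i}) / (∑ i, e^{α x i})`. -/
noncomputable def boltzmann {n : ℕ} (α : ℝ) (x : Fin n → ℝ) : ℝ :=
  (∑ i, x i * Real.exp (α * x i)) / (∑ i, Real.exp (α * x i))

open Finset Real

lemma sum_sub_le_card_mul_sqrt_sum_sq {ι : Type*} [Fintype ι] [DecidableEq ι]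
    (x : ι → ℝ) (j : ι) :
    ∑ i, (x j - x i) ≤ Fintype.card ι * √(∑ i, x i ^ 2) := by
  set n : ℝ := (Fintype.card ι : ℝ)
  set c : ι → ℝ := fun i ↦ (if i = j then n else 0) - 1
  have hsum : ∑ i, (x j - x i) = ∑ i, c i * x i := by
    simp [c, n, sub_mul, ite_mul, sum_sub_distrib]
  have hc : ∑ i, c i ^ 2 = n ^ 2 - n := by
    have hsq : ∀ i, c i ^ 2 = (if i = j then n ^ 2 - 2 * n else 0) + 1 := fun i ↦ by
      by_cases h : i = j
      · simp only [c, h, if_true]; ring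
      · simp [c, h]
    simp only [hsq, sum_add_distrib, sum_ite_eq', mem_univ, if_true, sum_const, card_univ]
    simp [n]; ring
  calc ∑ i, (x j - x i) ≤ √(∑ i, c i ^ 2) * √(∑ i, x i ^ 2) :=
        hsum ▸ sum_mul_le_sqrt_mul_sqrt _ _ _
    _ ≤ n * √(∑ i, x i ^ 2) := by
        gcongr
        rw [hc, sqrt_le_left (by positivity)]
        linarith [show 0 ≤ n by positivity]

variable {n : ℕ}

lemma sum_exp_pos [Nonempty (Fin n)] (α : ℝ) (x : Fin n → ℝ) : 0 < ∑ i, exp (α * x i) :=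
  sum_pos (fun _ _ ↦ exp_pos _) univ_nonempty

lemma sub_boltzmann_eq [Nonempty (Fin n)] (α c : ℝ) (x : Fin n → ℝ) :
    c - boltzmann α x = (∑ i, (c - x i) * exp (α * x i)) / ∑ i, exp (α * x i) := by
  have hS := (sum_exp_pos α x).ne'
  rw [boltzmann, eq_div_iff hS, sub_mul, div_mul_cancel₀ _ hS, mul_sum, ← sum_sub_distrib]
  simp only [sub_mul]

theorem abs_boltzmann_sub_le {α b c : ℝ} {x : Fin n → ℝ} {s : Finset (Fin n)} (hs : s.Nonempty)
    (hα : 0 ≤ α) (hle : ∀ i, x i ≤ c) (hs_eq : ∀ i ∈ s, x i = c) (hb : ∀ i ∉ s, x i ≤ b) :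
    |boltzmann α x - c| ≤ (∑ i, (c - x i)) / #s * exp (-α * (c - b)) := by
  have : Nonempty (Fin n) := ⟨hs.choose⟩
  have hnum_nonneg : 0 ≤ ∑ i, (c - x i) * exp (α * x i) :=
    sum_nonneg fun i _ ↦ mul_nonneg (sub_nonneg.2 (hle i)) (exp_pos _).le
  have hnum : ∑ i, (c - x i) * exp (α * x i) ≤ exp (α * b) * ∑ i, (c - x i) := by
    rw [mul_sum]
    refine sum_le_sum fun i _ ↦ ?_
    by_cases hi : i ∈ s
    · simp [hs_eq i hi]
    · rw [mul_comm (exp (α * b))]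
      exact mul_le_mul_of_nonneg_left (exp_le_exp.2 (mul_le_mul_of_nonneg_left (hb i hi) hα))
        (sub_nonneg.2 (hle i))
  have hden : #s * exp (α * c) ≤ ∑ i, exp (α * x i) :=
    calc #s * exp (α * c) = ∑ i ∈ s, exp (α * x i) := by
          rw [sum_congr rfl fun i hi ↦ by rw [hs_eq i hi], sum_const, nsmul_eq_mul]
      _ ≤ ∑ i, exp (α * x i) :=
          sum_le_sum_of_subset_of_nonneg (subset_univ _) fun _ _ _ ↦ (exp_pos _).le
  rw [abs_sub_comm, sub_boltzmann_eq, abs_of_nonneg (div_nonneg hnum_nonneg (sum_exp_pos _ _).le)]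
  calc _ ≤ exp (α * b) * (∑ i, (c - x i)) / (#s * exp (α * c)) :=
        div_le_div₀ (hnum_nonneg.trans hnum) hnum
          (mul_pos (Nat.cast_pos.2 hs.card_pos) (exp_pos _)) hden
    _ = _ := by
        rw [show -α * (c - b) = α * b - α * c by ring, exp_sub]
        field_simp

theorem boltzmann_max_error_bound {n : ℕ} (x : Fin n → ℝ)
    (hanti : ∀ i j : Fin n, i ≤ j → x j ≤ x i)
    (m : ℕ) (hm1 : 1 ≤ m) (hmn : m < n)
    (hconst : ∀ i : Fin n, (i : ℕ) < m → x i = x ⟨0, by omega⟩)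
    (α : ℝ) (hα : 0 < α) :
    |boltzmann α x - x ⟨0, by omega⟩| ≤
      ((n : ℝ) / m) * Real.exp (-α * (x ⟨0, by omega⟩ - x ⟨m, hmn⟩)) *
        Real.sqrt (∑ i, (x i) ^ 2) := by
  set s := Iio (⟨m, hmn⟩ : Fin n)
  have hs : s.Nonempty := ⟨⟨0, by omega⟩, by simp [s, Fin.lt_def]; omega⟩
  calc _ ≤ (∑ i, (x ⟨0, by omega⟩ - x i)) / #s * exp (-α * (x ⟨0, by omega⟩ - x ⟨m, hmn⟩)) :=
        abs_boltzmann_sub_le hs hα.le (fun i ↦ hanti _ i (by simp [Fin.le_def]))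
          (fun i hi ↦ hconst i (by simpa [s, Fin.lt_def] using hi))
          (fun i hi ↦ hanti _ _ (by simpa [s] using hi))
    _ ≤ (n * √(∑ i, x i ^ 2)) / m * exp (-α * (x ⟨0, by omega⟩ - x ⟨m, hmn⟩)) := by
        rw [Fin.card_Iio]
        gcongr
        simpa using sum_sub_le_card_mul_sqrt_sum_sq x _
    _ = _ := by ring
end

section
/- Let n ≥ 1 and let x⃗ = (x₁, …, xₙ) ∈ ℝⁿ be a nonincreasing vector such that x_{n−l} > x_{n−l+1} = ⋯ = xₙ for some 1 ≤ l < n. Then for every α > 0, |B_{−α}(x⃗) − xₙ| ≤ (n/l) · e^{−α(x_{n−l} − xₙ)} · ‖x⃗‖, where ‖·‖ is the Euclidean norm. -/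
lemma key_ineq' (s l A B R : ℝ) (hs : 0 ≤ s) (hl : 1 ≤ l) (hA : 0 ≤ A) (hB : 0 ≤ B)
    (hR : 0 ≤ R) (hjoint : A^2 + l * B^2 ≤ R^2) :
    s * A + s^2 * B ≤ (s^2 + l) * R := by
  have hL0 : 0 ≤ s * A + s^2 * B := by positivity
  have hl0 : (0:ℝ) < l := by linarith
  have hsq : (s * A + s^2 * B)^2 ≤ ((s^2 + l) * R)^2 := by
    have h1 : l * (s * A + s^2 * B)^2 ≤ (l*s^2 + s^4) * (A^2 + l*B^2) := by
      nlinarith [sq_nonneg (s^2*A - s*l*B)]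
    have h2 : (l*s^2 + s^4) * (A^2 + l*B^2) ≤ (l*s^2 + s^4) * R^2 := by
      have : (0:ℝ) ≤ l*s^2 + s^4 := by positivity
      exact mul_le_mul_of_nonneg_left hjoint this
    have h3 : (l*s^2 + s^4) * R^2 ≤ l * ((s^2+l)*R)^2 := by
      nlinarith [mul_nonneg (mul_nonneg (by linarith : (0:ℝ) ≤ l - 1) (pow_nonneg hs 4)) (sq_nonneg R),
        mul_nonneg (mul_nonneg (by nlinarith : (0:ℝ) ≤ l*(2*l-1)) (sq_nonneg s)) (sq_nonneg R),
        mul_nonneg (mul_nonneg (mul_nonneg hl0.le hl0.le) hl0.le) (sq_nonneg R)]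
    nlinarith
  have h := Real.sqrt_le_sqrt hsq
  rwa [Real.sqrt_sq hL0, Real.sqrt_sq (by positivity)] at h

lemma key_ineq (a l A B R : ℝ) (ha : 0 ≤ a) (hl : 1 ≤ l) (hA : 0 ≤ A) (hB : 0 ≤ B)
    (hR : 0 ≤ R) (hjoint : A^2 + l * B^2 ≤ R^2) :
    Real.sqrt a * A + a * B ≤ (a + l) * R := by
  have hsa2 : Real.sqrt a ^ 2 = a := Real.sq_sqrt ha
  have := key_ineq' (Real.sqrt a) l A B R (Real.sqrt_nonneg a) hl hA hB hR hjoint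
  rwa [hsa2] at this

lemma boltz_aux {n : ℕ} (x : Fin n → ℝ) (l : ℕ) (hl1 : 1 ≤ l) (hln : l < n)
    (m g : ℝ) (hg : 0 < g)
    (hconst : ∀ i : Fin n, n - l ≤ (i:ℕ) → x i = m)
    (hlow : ∀ i : Fin n, (i:ℕ) < n - l → m + g ≤ x i)
    (α : ℝ) (hα : 0 < α) :
    |boltzmann (-α) x - m| ≤ ((n:ℝ)/l) * Real.exp (-α * g) * Real.sqrt (∑ i, x i ^ 2) := by
  set w : Fin n → ℝ := fun i => Real.exp (-α * x i) with hw
  set s : Finset (Fin n) := Finset.univ.filter (fun i => (i:ℕ) < n - l) with hsdef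
  have hnl : n - l < n := by omega
  have hs_card : s.card = n - l := by
    rw [hsdef, show (Finset.univ.filter (fun i : Fin n => (i:ℕ) < n - l)) = Finset.Iio ⟨n - l, hnl⟩
      from by ext i; simp [Fin.lt_def], Fin.card_Iio]
  have hsc_card : sᶜ.card = l := by
    have := Finset.card_compl s (α := Fin n)
    rw [hs_card] at this; simp at this; omega
  have hW : 0 < ∑ i, w i :=
    Finset.sum_pos (fun i _ => Real.exp_pos _) ⟨⟨0, by omega⟩, Finset.mem_univ _⟩
  -- rewrite difference
  have hsum : ∑ i, (x i - m) * w i = (∑ i, x i * w i) - m * ∑ i, w i := by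
    rw [Finset.mul_sum, ← Finset.sum_sub_distrib]
    exact Finset.sum_congr rfl (fun i _ => by ring)
  have hdiff : boltzmann (-α) x - m = (∑ i, (x i - m) * w i) / (∑ i, w i) := by
    rw [boltzmann, hsum, sub_div, mul_div_assoc, div_self hW.ne', mul_one]
  have hN : ∑ i, (x i - m) * w i = ∑ i ∈ s, (x i - m) * w i := by
    refine (Finset.sum_subset (Finset.subset_univ s) ?_).symm
    intro i _ hi
    have : x i = m := hconst i (by simp [hsdef] at hi; omega)
    rw [this]; ring
  have hterm0 : ∀ i ∈ s, 0 ≤ (x i - m) * w i := by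
    intro i hi
    have := hlow i (by simp [hsdef] at hi; exact hi)
    exact mul_nonneg (by linarith) (Real.exp_pos _).le
  have hN0 : 0 ≤ ∑ i ∈ s, (x i - m) * w i := Finset.sum_nonneg hterm0
  set S : ℝ := ∑ i ∈ s, (x i - m) with hSdef
  have hNle : ∑ i ∈ s, (x i - m) * w i ≤ Real.exp (-α * (m + g)) * S := by
    rw [hSdef, Finset.mul_sum]
    refine Finset.sum_le_sum (fun i hi => ?_)
    have hx : m + g ≤ x i := hlow i (by simp [hsdef] at hi; exact hi)
    have hwle : w i ≤ Real.exp (-α * (m + g)) := Real.exp_le_exp.2 (by nlinarith)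
    calc (x i - m) * w i ≤ (x i - m) * Real.exp (-α * (m + g)) :=
          mul_le_mul_of_nonneg_left hwle (by linarith)
      _ = Real.exp (-α * (m + g)) * (x i - m) := by ring
  have hWge : (l:ℝ) * Real.exp (-α * m) ≤ ∑ i, w i := by
    have h1 : ∑ i ∈ sᶜ, w i = (l:ℝ) * Real.exp (-α * m) := by
      have : ∀ i ∈ sᶜ, w i = Real.exp (-α * m) := by
        intro i hi
        have : x i = m := hconst i (by simp [hsdef] at hi; omega)
        rw [hw]; simp [this]
      rw [Finset.sum_congr rfl this, Finset.sum_const, hsc_card, nsmul_eq_mul]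
    rw [← h1]
    exact Finset.sum_le_sum_of_subset_of_nonneg (Finset.subset_univ _)
      (fun i _ _ => (Real.exp_pos _).le)
  have hBm0 : 0 ≤ boltzmann (-α) x - m := by
    rw [hdiff, hN]; exact div_nonneg hN0 hW.le
  rw [abs_of_nonneg hBm0, hdiff, hN]
  set R : ℝ := Real.sqrt (∑ i, x i ^ 2) with hRdef
  have hR0 : 0 ≤ R := Real.sqrt_nonneg _
  -- key bound S ≤ n * R
  have hS_le : S ≤ (n:ℝ) * R := by
    set A : ℝ := Real.sqrt (∑ i ∈ s, x i ^ 2) with hAdef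
    have hA0 : 0 ≤ A := Real.sqrt_nonneg _
    have hA2 : A ^ 2 = ∑ i ∈ s, x i ^ 2 := Real.sq_sqrt (Finset.sum_nonneg fun i _ => sq_nonneg _)
    have hR2 : R ^ 2 = ∑ i, x i ^ 2 := Real.sq_sqrt (Finset.sum_nonneg fun i _ => sq_nonneg _)
    have hjoint : A ^ 2 + (l:ℝ) * |m| ^ 2 ≤ R ^ 2 := by
      have hsplit : ∑ i ∈ s, x i ^ 2 + ∑ i ∈ sᶜ, x i ^ 2 = ∑ i, x i ^ 2 :=
        Finset.sum_add_sum_compl s _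
      have hcomp : ∑ i ∈ sᶜ, x i ^ 2 = (l:ℝ) * m ^ 2 := by
        have : ∀ i ∈ sᶜ, x i ^ 2 = m ^ 2 := by
          intro i hi
          rw [hconst i (by simp [hsdef] at hi; omega)]
        rw [Finset.sum_congr rfl this, Finset.sum_const, hsc_card, nsmul_eq_mul]
      rw [hA2, hR2, sq_abs, ← hsplit, hcomp]
    have hS1 : S ≤ ∑ i ∈ s, |x i| + ((n - l : ℕ):ℝ) * |m| := by
      calc S ≤ ∑ i ∈ s, (|x i| + |m|) :=
            Finset.sum_le_sum (fun i _ => by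
              have := le_abs_self (x i); have := neg_le_abs m; linarith)
        _ = ∑ i ∈ s, |x i| + ((n - l : ℕ):ℝ) * |m| := by
            rw [Finset.sum_add_distrib, Finset.sum_const, hs_card, nsmul_eq_mul]
    have hCS : ∑ i ∈ s, |x i| ≤ Real.sqrt ((n - l : ℕ):ℝ) * A := by
      have h1 : (∑ i ∈ s, |x i|) ^ 2 ≤ ((n - l : ℕ):ℝ) * ∑ i ∈ s, x i ^ 2 := by
        have := sq_sum_le_card_mul_sum_sq (s := s) (f := fun i => |x i|)
        simpa [sq_abs, hs_card] using this
      have h2 : ∑ i ∈ s, |x i| = Real.sqrt ((∑ i ∈ s, |x i|) ^ 2) :=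
        (Real.sqrt_sq (Finset.sum_nonneg fun i _ => abs_nonneg _)).symm
      rw [h2]
      calc Real.sqrt ((∑ i ∈ s, |x i|) ^ 2) ≤ Real.sqrt (((n - l : ℕ):ℝ) * ∑ i ∈ s, x i ^ 2) :=
            Real.sqrt_le_sqrt h1
        _ = Real.sqrt ((n - l : ℕ):ℝ) * A := by
            rw [hAdef, Real.sqrt_mul (by positivity)]
    have hkey := key_ineq ((n - l : ℕ):ℝ) (l:ℝ) A |m| R (by positivity)
      (by exact_mod_cast hl1) hA0 (abs_nonneg _) hR0 hjoint
    have hnl_cast : ((n - l : ℕ):ℝ) + (l:ℝ) = (n:ℝ) := by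
      rw [Nat.cast_sub hln.le]; ring
    rw [hnl_cast] at hkey
    linarith
  -- combine
  have hlpos : (0:ℝ) < (l:ℝ) * Real.exp (-α * m) := by positivity
  have hS0 : 0 ≤ S := Finset.sum_nonneg (fun i hi => by
    have := hlow i (by simp [hsdef] at hi; exact hi); linarith)
  calc (∑ i ∈ s, (x i - m) * w i) / (∑ i, w i)
      ≤ (Real.exp (-α * (m + g)) * S) / ((l:ℝ) * Real.exp (-α * m)) :=
        div_le_div₀ (mul_nonneg (Real.exp_pos _).le hS0) hNle hlpos hWge
    _ = Real.exp (-α * g) * S / (l:ℝ) := by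
        rw [show (-α * (m + g)) = (-α * m) + (-α * g) by ring, Real.exp_add]
        have hl0 : ((l:ℝ)) ≠ 0 := by positivity
        field_simp
    _ ≤ Real.exp (-α * g) * ((n:ℝ) * R) / (l:ℝ) := by gcongr
    _ = ((n:ℝ)/l) * Real.exp (-α * g) * R := by ring


theorem boltzmann_min_error_bound {n : ℕ} (hn : 1 ≤ n) (x : Fin n → ℝ)
    (hanti : ∀ i j : Fin n, i ≤ j → x j ≤ x i)
    (l : ℕ) (hl1 : 1 ≤ l) (hln : l < n)
    (hconst : ∀ i : Fin n, n - l ≤ (i : ℕ) → x i = x ⟨n - 1, by omega⟩)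
    (hgap : x ⟨n - 1, by omega⟩ < x ⟨n - l - 1, by omega⟩)
    (α : ℝ) (hα : 0 < α) :
    |boltzmann (-α) x - x ⟨n - 1, by omega⟩| ≤
      ((n : ℝ) / l) * Real.exp (-α * (x ⟨n - l - 1, by omega⟩ - x ⟨n - 1, by omega⟩)) *
        Real.sqrt (∑ i, (x i) ^ 2) := by
  apply boltz_aux x l hl1 hln (x ⟨n - 1, by omega⟩)
    (x ⟨n - l - 1, by omega⟩ - x ⟨n - 1, by omega⟩) (by linarith) hconst ?_ α hα
  intro i hi
  have hle : i ≤ (⟨n - l - 1, by omega⟩ : Fin n) := by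
    rw [Fin.le_def]; simp; omega
  have := hanti i ⟨n - l - 1, by omega⟩ hle
  linarith
end

section
/- For every vector x⃗ = (x₁, …, xₙ) ∈ ℝⁿ, every real α, and every index j, the partial derivative of the Boltzmann operator with respect to x_j equals Softmax(α x⃗)_j · (1 + α (x_j − B_α(x⃗))), where Softmax(v⃗)_j = e^{v_j} / Σᵢ₌₁ⁿ e^{vᵢ}. -/
/-- The softmax function: `Softmax(v)_j = e^{v j} / ∑ i, e^{v i}`. -/
noncomputable def softmax {n : ℕ} (v : Fin n → ℝ) (j : Fin n) : ℝ :=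
  Real.exp (v j) / ∑ i, Real.exp (v i)

/-! Both sums in `boltzmann` are of the form `∑ i, g (x i)`, and moving the single coordinate
`x j` changes only one summand; the theorem is then the quotient rule. -/

open Function

theorem hasDerivAt_sum_comp_update {ι : Type*} [Fintype ι] [DecidableEq ι]
    {g : ℝ → ℝ} {g' : ℝ} (x : ι → ℝ) (j : ι) (hg : HasDerivAt g g' (x j)) :
    HasDerivAt (fun t => ∑ i, g (update x j t i)) g' (x j) := by
  have hsum : (fun t => ∑ i, g (update x j t i))
      = fun t => g t + ∑ i ∈ Finset.univ \ {j}, g (x i) := by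
    funext t
    simp only [← comp_apply (f := g), comp_update, Finset.sum_update_of_mem (Finset.mem_univ j)]
  rw [hsum]
  exact hg.add_const _

theorem hasDerivAt_exp_const_mul (α s : ℝ) :
    HasDerivAt (fun t => Real.exp (α * t)) (α * Real.exp (α * s)) s := by
  simpa [mul_comm] using ((hasDerivAt_id s).const_mul α).exp

theorem hasDerivAt_mul_exp_const_mul (α s : ℝ) :
    HasDerivAt (fun t => t * Real.exp (α * t))
      (Real.exp (α * s) + s * (α * Real.exp (α * s))) s := by
  simpa using (hasDerivAt_id' s).fun_mul (hasDerivAt_exp_const_mul α s)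

theorem boltzmann_denom_pos {n : ℕ} (α : ℝ) (x : Fin n → ℝ) (j : Fin n) :
    0 < ∑ i, Real.exp (α * x i) :=
  Finset.sum_pos (fun _ _ => Real.exp_pos _) ⟨j, Finset.mem_univ j⟩

theorem boltzmann_partial_deriv {n : ℕ} (x : Fin n → ℝ) (α : ℝ) (j : Fin n) :
    HasDerivAt (fun t : ℝ => boltzmann α (Function.update x j t))
      (softmax (fun i => α * x i) j * (1 + α * (x j - boltzmann α x))) (x j) := by
  have hnum := hasDerivAt_sum_comp_update x j (hasDerivAt_mul_exp_const_mul α (x j))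
  have hden := hasDerivAt_sum_comp_update x j (hasDerivAt_exp_const_mul α (x j))
  have hpos := boltzmann_denom_pos α x j
  refine (hnum.fun_div hden (by simpa only [update_eq_self] using hpos.ne')).congr_deriv ?_
  simp only [update_eq_self, boltzmann, softmax]
  field_simp
  ring
end

section
/- Let A and Ω be nonempty bounded subsets of ℝ², let 𝒴 = {y₁, …, y_N} ⊆ A and 𝒲 = {w₁, …, w_M} ⊆ Ω be nonempty finite subsets. Then there exist constants C₀ > 0 and C > 0 (depending only on 𝒴 and 𝒲) such that for all sufficiently large α > 0, d_H(A, Ω) ≤ d_H(A, 𝒴) + d_H(Ω, 𝒲) + H_α(𝒴, 𝒲) + C₀ e^{−α C}, where d_H denotes the Hausdorff distance with respect to the Euclidean metric. -/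
open Finset
lemma denom_pos {n : ℕ} (ne : (Finset.univ : Finset (Fin n)).Nonempty) (α : ℝ) (x : Fin n → ℝ) :
    0 < ∑ i, Real.exp (α * x i) :=
  Finset.sum_pos (fun _ _ => Real.exp_pos _) ne

lemma boltzmann_le_sup' {n : ℕ} (ne : (Finset.univ : Finset (Fin n)).Nonempty)
    (α : ℝ) (x : Fin n → ℝ) : boltzmann α x ≤ Finset.univ.sup' ne x := by
  rw [boltzmann, div_le_iff₀ (denom_pos ne α x), Finset.mul_sum]
  exact Finset.sum_le_sum fun i _ => by
    have := Finset.le_sup' x (Finset.mem_univ i)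
    nlinarith [Real.exp_pos (α * x i)]

lemma inf'_le_boltzmann {n : ℕ} (ne : (Finset.univ : Finset (Fin n)).Nonempty)
    (α : ℝ) (x : Fin n → ℝ) : Finset.univ.inf' ne x ≤ boltzmann α x := by
  rw [boltzmann, le_div_iff₀ (denom_pos ne α x), Finset.mul_sum]
  exact Finset.sum_le_sum fun i _ => by
    have := Finset.inf'_le x (Finset.mem_univ i)
    nlinarith [Real.exp_pos (α * x i)]

lemma boltzmann_neg {n : ℕ} (α : ℝ) (x : Fin n → ℝ) :
    boltzmann (-α) x = -(boltzmann α (fun i => -x i)) := by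
  rw [boltzmann, boltzmann, ← neg_div]
  congr 1
  · rw [← Finset.sum_neg_distrib]
    exact Finset.sum_congr rfl fun i _ => by ring_nf
  · exact Finset.sum_congr rfl fun i _ => by ring_nf

lemma sup'_sub_boltzmann_le {n : ℕ} (ne : (Finset.univ : Finset (Fin n)).Nonempty)
    (α : ℝ) (x : Fin n → ℝ) :
    Finset.univ.sup' ne x - boltzmann α x ≤
      ∑ i, (Finset.univ.sup' ne x - x i) * Real.exp (-α * (Finset.univ.sup' ne x - x i)) := by
  set m := Finset.univ.sup' ne x with hm
  have hD := denom_pos ne α x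
  have key : m - boltzmann α x
      = (∑ i, (m - x i) * Real.exp (α * x i)) / (∑ i, Real.exp (α * x i)) := by
    rw [boltzmann, eq_div_iff (ne_of_gt hD), sub_mul, div_mul_cancel₀ _ (ne_of_gt hD),
      Finset.mul_sum, ← Finset.sum_sub_distrib]
    exact Finset.sum_congr rfl fun i _ => by ring
  rw [key]
  obtain ⟨i₀, -, hi₀⟩ := Finset.exists_mem_eq_sup' ne x
  have hden : Real.exp (α * m) ≤ ∑ i, Real.exp (α * x i) := by
    rw [hm, hi₀]
    exact Finset.single_le_sum (f := fun i => Real.exp (α * x i))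
      (fun i _ => le_of_lt (Real.exp_pos _)) (Finset.mem_univ i₀)
  have hnum : 0 ≤ ∑ i, (m - x i) * Real.exp (α * x i) :=
    Finset.sum_nonneg fun i _ => mul_nonneg (by simp [hm, Finset.le_sup' x (Finset.mem_univ i)])
      (le_of_lt (Real.exp_pos _))
  calc (∑ i, (m - x i) * Real.exp (α * x i)) / (∑ i, Real.exp (α * x i))
      ≤ (∑ i, (m - x i) * Real.exp (α * x i)) / Real.exp (α * m) :=
        div_le_div_of_nonneg_left hnum (Real.exp_pos _) hden
    _ = ∑ i, (m - x i) * Real.exp (-α * (m - x i)) := by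
        rw [Finset.sum_div]
        exact Finset.sum_congr rfl fun i _ => by
          rw [mul_div_assoc, ← Real.exp_sub]; ring_nf

lemma exists_delta {ι : Type*} (s : Finset ι) (f : ι → ℝ) :
    ∃ δ > (0:ℝ), ∀ i ∈ s, 0 < f i → δ ≤ f i := by
  classical
  rcases (s.filter (fun i => 0 < f i)).eq_empty_or_nonempty with h | h
  · refine ⟨1, one_pos, fun i hi hfi => ?_⟩
    exact absurd hfi (Finset.filter_eq_empty_iff.mp h hi)
  · refine ⟨(s.filter (fun i => 0 < f i)).inf' h f, ?_,
      fun i hi hfi => Finset.inf'_le _ (Finset.mem_filter.2 ⟨hi, hfi⟩)⟩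
    obtain ⟨i, hi, hie⟩ := Finset.exists_mem_eq_inf' h f
    rw [hie]
    exact (Finset.mem_filter.1 hi).2

set_option maxHeartbeats 800000 in
lemma core {n m : ℕ} (d : Fin n → Fin m → ℝ) (hd : ∀ i k, 0 ≤ d i k)
    (nen : (Finset.univ : Finset (Fin n)).Nonempty)
    (nem : (Finset.univ : Finset (Fin m)).Nonempty) :
    ∃ C₀ > (0:ℝ), ∃ C > (0:ℝ), ∃ α₀ > (0:ℝ), ∀ α ≥ α₀,
      Finset.univ.sup' nen (fun i => Finset.univ.inf' nem (d i)) ≤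
        boltzmann α (fun i => boltzmann (-α) (d i)) + C₀ * Real.exp (-α * C) := by
  classical
  set a : Fin n → ℝ := fun i => Finset.univ.inf' nem (d i) with ha
  set s := Finset.univ.sup' nen a with hs
  have ha0 : ∀ i, 0 ≤ a i := fun i => Finset.le_inf' _ _ fun k _ => hd i k
  have has : ∀ i, a i ≤ s := fun i => Finset.le_sup' a (Finset.mem_univ i)
  set Dm := Finset.univ.sup' nen (fun i => Finset.univ.sup' nem (d i)) with hDm
  have hdDm : ∀ i k, d i k ≤ Dm := fun i k =>
    le_trans (Finset.le_sup' (d i) (Finset.mem_univ k)) (Finset.le_sup' (fun j => Finset.univ.sup' nem (d j)) (Finset.mem_univ i))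
  have haDm : ∀ i, a i ≤ Dm := fun i => le_trans (Finset.inf'_le (d i) (Finset.mem_univ nem.choose)) (hdDm i _)
  have hsDm : s ≤ Dm := Finset.sup'_le nen a fun i _ => haDm i
  have hDm0 : 0 ≤ Dm := le_trans (ha0 nen.choose) (haDm _)
  set Dx := Dm + 1 with hDx
  have hDx0 : 0 < Dx := by linarith
  obtain ⟨δ₁, hδ₁, hgap1'⟩ := exists_delta (Finset.univ : Finset (Fin n × Fin m))
    (fun p => d p.1 p.2 - a p.1)
  obtain ⟨δ₂, hδ₂, hgap2'⟩ := exists_delta (Finset.univ : Finset (Fin n)) (fun i => s - a i)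
  set δ := min δ₁ δ₂ with hδdef
  have hδ : 0 < δ := lt_min hδ₁ hδ₂
  have hgap1 : ∀ i k, a i < d i k → δ ≤ d i k - a i := fun i k h =>
    le_trans (min_le_left _ _) (hgap1' (i, k) (Finset.mem_univ _) (by simpa using sub_pos.2 h))
  have hgap2 : ∀ i, a i < s → δ ≤ s - a i := fun i h =>
    le_trans (min_le_right _ _) (hgap2' i (Finset.mem_univ _) (sub_pos.2 h))
  set K := (m : ℝ) * Dx with hK
  have hK0 : 0 < K := mul_pos (by exact_mod_cast Nat.pos_of_ne_zero (fun h => by subst h; exact absurd nem (by simp))) hDx0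
  set T := Dx + δ with hT
  have hT0 : 0 < T := by linarith
  set L := -Real.log (δ / (2 * K)) / δ with hL
  have hnpos : (0:ℝ) < (n:ℝ) := by
    have : n ≠ 0 := fun h => by subst h; exact absurd nen (by simp)
    exact_mod_cast Nat.pos_of_ne_zero this
  refine ⟨(n : ℝ) * (K + T), by nlinarith, δ / 2, by linarith,
    max 1 (L + 1), lt_of_lt_of_le one_pos (le_max_left _ _), fun α hα => ?_⟩
  have hα1 : (1:ℝ) ≤ α := le_trans (le_max_left _ _) hα
  have hαpos : 0 < α := by linarith
  have hLα : L ≤ α := by have := le_trans (le_max_right 1 (L + 1)) hα; linarith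
  have hq : (0:ℝ) < δ / (2 * K) := by positivity
  have hexp : Real.exp (-(α * δ)) ≤ δ / (2 * K) := by
    rw [← Real.exp_log hq]
    apply Real.exp_le_exp.2
    have hLδ : L * δ = -Real.log (δ / (2 * K)) := by
      rw [hL]; field_simp
    nlinarith
  set ε := K * Real.exp (-(α * δ)) with hε
  have hε0 : 0 ≤ ε := le_of_lt (mul_pos hK0 (Real.exp_pos _))
  have hεδ : ε ≤ δ / 2 := by
    calc ε ≤ K * (δ / (2 * K)) := by
          exact mul_le_mul_of_nonneg_left hexp (le_of_lt hK0)
      _ = δ / 2 := by field_simp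
  set v : Fin n → ℝ := fun i => boltzmann (-α) (d i) with hv
  have hva : ∀ i, a i ≤ v i := fun i => inf'_le_boltzmann nem (-α) (d i)
  have hvb : ∀ i, v i ≤ a i + ε := by
    intro i
    have hsup : Finset.univ.sup' nem (fun k => -(d i k)) = -a i := by
      apply le_antisymm
      · exact Finset.sup'_le nem _ fun k _ => neg_le_neg (Finset.inf'_le (d i) (Finset.mem_univ k))
      · obtain ⟨k₀, -, hk₀⟩ := Finset.exists_mem_eq_inf' nem (d i)
        rw [ha]
        simp only [hk₀]
        exact Finset.le_sup' (fun k => -(d i k)) (Finset.mem_univ k₀)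
    have hrate := sup'_sub_boltzmann_le nem α (fun k => -(d i k))
    rw [hsup] at hrate
    have hveq : v i = -(boltzmann α (fun k => -(d i k))) := boltzmann_neg α (d i)
    have hsum : ∑ k, (-a i - -(d i k)) * Real.exp (-α * (-a i - -(d i k))) ≤ ε := by
      have hterm : ∀ k ∈ Finset.univ, (-a i - -(d i k)) * Real.exp (-α * (-a i - -(d i k)))
          ≤ Dx * Real.exp (-(α * δ)) := by
        intro k _
        have h1 : a i ≤ d i k := Finset.inf'_le (d i) (Finset.mem_univ k)
        rcases eq_or_lt_of_le h1 with h2 | h2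
        · simp only [← h2]
          simp
          positivity
        · have hgap := hgap1 i k h2
          have ht1 : d i k - a i ≤ Dx := by have := hdDm i k; have := ha0 i; linarith
          have hexp2 : Real.exp (-α * (-a i - -(d i k))) ≤ Real.exp (-(α * δ)) := by
            apply Real.exp_le_exp.2
            nlinarith
          calc (-a i - -(d i k)) * Real.exp (-α * (-a i - -(d i k)))
              ≤ Dx * Real.exp (-α * (-a i - -(d i k))) := by
                apply mul_le_mul_of_nonneg_right (by linarith) (le_of_lt (Real.exp_pos _))
            _ ≤ Dx * Real.exp (-(α * δ)) :=
                mul_le_mul_of_nonneg_left hexp2 (le_of_lt hDx0)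
      calc ∑ k, (-a i - -(d i k)) * Real.exp (-α * (-a i - -(d i k)))
          ≤ ∑ _k : Fin m, Dx * Real.exp (-(α * δ)) := Finset.sum_le_sum hterm
        _ = ε := by rw [Finset.sum_const, Finset.card_univ, Fintype.card_fin, nsmul_eq_mul, hε, hK]; ring
    have := le_trans hrate hsum
    rw [hveq] at *
    linarith
  set mv := Finset.univ.sup' nen v with hmv
  have hsmv : s ≤ mv := by
    obtain ⟨i₀, -, hi₀⟩ := Finset.exists_mem_eq_sup' nen a
    calc s = a i₀ := by rw [hs, hi₀]
      _ ≤ v i₀ := hva i₀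
      _ ≤ mv := Finset.le_sup' v (Finset.mem_univ i₀)
  have hmvs : mv ≤ s + ε := Finset.sup'_le nen v fun i _ => le_trans (hvb i) (by linarith [has i])
  have hrate2 := sup'_sub_boltzmann_le nen α v
  rw [← hmv] at hrate2
  have hterm2 : ∀ i ∈ Finset.univ, (mv - v i) * Real.exp (-α * (mv - v i))
      ≤ K * Real.exp (-(α * δ)) + T * Real.exp (-(α * (δ / 2))) := by
    intro i _
    have hvi : v i ≤ mv := Finset.le_sup' v (Finset.mem_univ i)
    by_cases hcase : a i < s
    · have hgap := hgap2 i hcase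
      have ht1 : δ / 2 ≤ mv - v i := by have := hvb i; linarith
      have ht2 : mv - v i ≤ T := by
        have := hva i; have := ha0 i
        have : 0 ≤ v i := by linarith
        have : mv ≤ Dm + δ / 2 := by linarith [hsDm, hεδ, hmvs]
        rw [hT, hDx]; linarith
      have hexp2 : Real.exp (-α * (mv - v i)) ≤ Real.exp (-(α * (δ / 2))) := by
        apply Real.exp_le_exp.2
        have := mul_le_mul_of_nonneg_left ht1 (le_of_lt hαpos)
        linarith
      have : (mv - v i) * Real.exp (-α * (mv - v i)) ≤ T * Real.exp (-(α * (δ / 2))) :=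
        mul_le_mul ht2 hexp2 (le_of_lt (Real.exp_pos _)) (le_of_lt hT0)
      linarith [mul_pos hK0 (Real.exp_pos (-(α * δ)))]
    · have haseq : a i = s := le_antisymm (has i) (not_lt.1 hcase)
      have ht : mv - v i ≤ ε := by have h1 := hva i; rw [haseq] at h1; linarith [hmvs]
      have hexp1 : Real.exp (-α * (mv - v i)) ≤ 1 := by
        apply Real.exp_le_one_iff.2
        have h0 : 0 ≤ mv - v i := by linarith
        have := mul_nonneg (le_of_lt hαpos) h0
        linarith
      have : (mv - v i) * Real.exp (-α * (mv - v i)) ≤ ε := by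
        calc (mv - v i) * Real.exp (-α * (mv - v i)) ≤ (mv - v i) * 1 :=
            mul_le_mul_of_nonneg_left hexp1 (by linarith)
          _ ≤ ε := by linarith
      have hTp := mul_pos hT0 (Real.exp_pos (-(α * (δ / 2))))
      rw [hε] at this
      linarith
  have hsum2 : ∑ i, (mv - v i) * Real.exp (-α * (mv - v i))
      ≤ (n : ℝ) * (K * Real.exp (-(α * δ)) + T * Real.exp (-(α * (δ / 2)))) := by
    calc ∑ i, (mv - v i) * Real.exp (-α * (mv - v i))
        ≤ ∑ _i : Fin n, (K * Real.exp (-(α * δ)) + T * Real.exp (-(α * (δ / 2)))) :=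
          Finset.sum_le_sum hterm2
      _ = _ := by rw [Finset.sum_const, Finset.card_univ, Fintype.card_fin, nsmul_eq_mul]
  have hfin : (n : ℝ) * (K * Real.exp (-(α * δ)) + T * Real.exp (-(α * (δ / 2))))
      ≤ (n : ℝ) * (K + T) * Real.exp (-α * (δ / 2)) := by
    have hrw : -α * (δ / 2) = -(α * (δ / 2)) := by ring
    rw [hrw]
    have he1 : Real.exp (-(α * δ)) ≤ Real.exp (-(α * (δ / 2))) := by
      apply Real.exp_le_exp.2
      have := mul_nonneg (le_of_lt hαpos) (le_of_lt hδ)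
      linarith
    calc (n : ℝ) * (K * Real.exp (-(α * δ)) + T * Real.exp (-(α * (δ / 2))))
        ≤ (n : ℝ) * (K * Real.exp (-(α * (δ / 2))) + T * Real.exp (-(α * (δ / 2)))) := by
          apply mul_le_mul_of_nonneg_left _ (le_of_lt hnpos)
          have h := mul_le_mul_of_nonneg_left he1 (le_of_lt hK0)
          linarith
      _ = (n : ℝ) * (K + T) * Real.exp (-(α * (δ / 2))) := by ring
  linarith [le_trans hrate2 hsum2, hfin, hsmv]

/-- The Hausdorff Approximation from Node-wise Distances (HAND):
`H_α(𝒴, 𝒲) = B_α((B_{−α}(dⁱ_·))_i) + B_α((B_{−α}(d·_k))_k)` with `dⁱ_k = ‖y i − w k‖`. -/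
noncomputable def hand {n N M : ℕ} (α : ℝ)
    (y : Fin N → EuclideanSpace ℝ (Fin n)) (w : Fin M → EuclideanSpace ℝ (Fin n)) : ℝ :=
  boltzmann α (fun i : Fin N => boltzmann (-α) (fun k : Fin M => dist (y i) (w k))) +
    boltzmann α (fun k : Fin M => boltzmann (-α) (fun i : Fin N => dist (y i) (w k)))

theorem hausdorffDist_le_hand {N M : ℕ} (hN : 0 < N) (hM : 0 < M)
    (A Ω : Set (EuclideanSpace ℝ (Fin 2)))
    (hAne : A.Nonempty) (hΩne : Ω.Nonempty)
    (hAbdd : Bornology.IsBounded A) (hΩbdd : Bornology.IsBounded Ω)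
    (y : Fin N → EuclideanSpace ℝ (Fin 2)) (w : Fin M → EuclideanSpace ℝ (Fin 2))
    (hy : ∀ i, y i ∈ A) (hw : ∀ k, w k ∈ Ω) :
    ∃ C₀ > (0 : ℝ), ∃ C > (0 : ℝ), ∃ α₀ > (0 : ℝ), ∀ α ≥ α₀,
      Metric.hausdorffDist A Ω ≤
        Metric.hausdorffDist A (Set.range y) + Metric.hausdorffDist Ω (Set.range w) +
          hand α y w + C₀ * Real.exp (-α * C) := by
  classical
  haveI : Nonempty (Fin N) := Fin.pos_iff_nonempty.mp hN
  haveI : Nonempty (Fin M) := Fin.pos_iff_nonempty.mp hM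
  have nen : (Finset.univ : Finset (Fin N)).Nonempty := Finset.univ_nonempty
  have nem : (Finset.univ : Finset (Fin M)).Nonempty := Finset.univ_nonempty
  obtain ⟨C01, hC01, C1, hC1, α1, hα1, hcore1⟩ :=
    core (fun i k => dist (y i) (w k)) (fun i k => dist_nonneg) nen nem
  obtain ⟨C02, hC02, C2, hC2, α2, hα2, hcore2⟩ :=
    core (fun k i => dist (y i) (w k)) (fun k i => dist_nonneg) nem nen
  set Y := Set.range y with hY
  set W := Set.range w with hW
  have hYne : Y.Nonempty := Set.range_nonempty y
  have hWne : W.Nonempty := Set.range_nonempty w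
  have hYbdd : Bornology.IsBounded Y := (Set.finite_range y).isBounded
  have hWbdd : Bornology.IsBounded W := (Set.finite_range w).isBounded
  have hAY : EMetric.hausdorffEdist A Y ≠ ⊤ :=
    Metric.hausdorffEdist_ne_top_of_nonempty_of_bounded hAne hYne hAbdd hYbdd
  have hYW : EMetric.hausdorffEdist Y W ≠ ⊤ :=
    Metric.hausdorffEdist_ne_top_of_nonempty_of_bounded hYne hWne hYbdd hWbdd
  set s₁ := Finset.univ.sup' nen (fun i => Finset.univ.inf' nem (fun k => dist (y i) (w k)))
    with hs₁
  set s₂ := Finset.univ.sup' nem (fun k => Finset.univ.inf' nen (fun i => dist (y i) (w k)))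
    with hs₂
  have hs₁0 : 0 ≤ s₁ := by
    rw [hs₁]
    exact le_trans
      (Finset.le_inf' nem (fun k => dist (y nen.choose) (w k)) fun k _ => dist_nonneg)
      (Finset.le_sup' (fun i => Finset.univ.inf' nem (fun k => dist (y i) (w k)))
        (Finset.mem_univ nen.choose))
  have hs₂0 : 0 ≤ s₂ := by
    rw [hs₂]
    exact le_trans
      (Finset.le_inf' nen (fun i => dist (y i) (w nem.choose)) fun i _ => dist_nonneg)
      (Finset.le_sup' (fun k => Finset.univ.inf' nen (fun i => dist (y i) (w k)))
        (Finset.mem_univ nem.choose))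
  have hdYW : Metric.hausdorffDist Y W ≤ s₁ + s₂ := by
    apply Metric.hausdorffDist_le_of_mem_dist (by linarith)
    · rintro x ⟨i, rfl⟩
      obtain ⟨k₀, -, hk₀⟩ := Finset.exists_mem_eq_inf' nem (fun k => dist (y i) (w k))
      refine ⟨w k₀, ⟨k₀, rfl⟩, ?_⟩
      have : Finset.univ.inf' nem (fun k => dist (y i) (w k)) ≤ s₁ := by
        rw [hs₁]
        exact Finset.le_sup' (fun i => Finset.univ.inf' nem (fun k => dist (y i) (w k)))
          (Finset.mem_univ i)
      rw [hk₀] at this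
      linarith
    · rintro x ⟨k, rfl⟩
      obtain ⟨i₀, -, hi₀⟩ := Finset.exists_mem_eq_inf' nen (fun i => dist (y i) (w k))
      refine ⟨y i₀, ⟨i₀, rfl⟩, ?_⟩
      have : Finset.univ.inf' nen (fun i => dist (y i) (w k)) ≤ s₂ := by
        rw [hs₂]
        exact Finset.le_sup' (fun k => Finset.univ.inf' nen (fun i => dist (y i) (w k)))
          (Finset.mem_univ k)
      rw [hi₀] at this
      rw [dist_comm]
      linarith
  have htri : Metric.hausdorffDist A Ω ≤
      Metric.hausdorffDist A Y + Metric.hausdorffDist Ω W + Metric.hausdorffDist Y W := by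
    have h1 : Metric.hausdorffDist A Ω ≤
        Metric.hausdorffDist A Y + Metric.hausdorffDist Y Ω :=
      Metric.hausdorffDist_triangle hAY
    have h2 : Metric.hausdorffDist Y Ω ≤
        Metric.hausdorffDist Y W + Metric.hausdorffDist W Ω :=
      Metric.hausdorffDist_triangle hYW
    rw [Metric.hausdorffDist_comm (s := W) (t := Ω)] at h2
    linarith
  refine ⟨C01 + C02, by linarith, min C1 C2, lt_min hC1 hC2, max α1 α2,
    lt_of_lt_of_le hα1 (le_max_left _ _), fun α hα => ?_⟩
  have hαpos : 0 < α := lt_of_lt_of_le (lt_of_lt_of_le hα1 (le_max_left _ _)) hα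
  have h1 := hcore1 α (le_trans (le_max_left _ _) hα)
  have h2 := hcore2 α (le_trans (le_max_right _ _) hα)
  have he1 : Real.exp (-α * C1) ≤ Real.exp (-α * min C1 C2) := by
    apply Real.exp_le_exp.2
    have : min C1 C2 ≤ C1 := min_le_left _ _
    nlinarith
  have he2 : Real.exp (-α * C2) ≤ Real.exp (-α * min C1 C2) := by
    apply Real.exp_le_exp.2
    have : min C1 C2 ≤ C2 := min_le_right _ _
    nlinarith
  have hee1 := mul_le_mul_of_nonneg_left he1 (le_of_lt hC01)
  have hee2 := mul_le_mul_of_nonneg_left he2 (le_of_lt hC02)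
  have hhand : s₁ + s₂ ≤ hand α y w + (C01 + C02) * Real.exp (-α * min C1 C2) := by
    rw [hand]
    linarith
  linarith
end

section
/- Let A and B be nonempty bounded subsets of a metric space (M, d), and let Y ⊆ A and W ⊆ B be nonempty subsets. Then d_H(A, B) ≤ d_H(A, Y) + d_H(B, W) + d'_H(Y, W). -/
/-!
Chain the triangle inequality for the Hausdorff distance through `Y` and `W`:
`d_H(A, B) ≤ d_H(A, Y) + d_H(Y, W) + d_H(W, B)`. Then `d_H(Y, W)`, the maximum of the two
nonnegative one-sided suprema, is at most their sum `d'_H(Y, W)`.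
-/

/-- The modified Hausdorff distance on subsets of a metric space:
`d'_H(X, Y) = sup_{x ∈ X} inf_{y ∈ Y} d(x, y) + sup_{y ∈ Y} inf_{x ∈ X} d(x, y)`. -/
noncomputable def modifiedHausdorffDist {X : Type*} [MetricSpace X] (A B : Set X) : ℝ :=
  (⨆ x ∈ A, Metric.infDist x B) + (⨆ y ∈ B, Metric.infDist y A)

namespace Metric

variable {X : Type*} [MetricSpace X] {s t : Set X}

theorem biSup_infDist_nonneg : 0 ≤ ⨆ x ∈ s, infDist x t :=
  Real.iSup_nonneg fun _ ↦ Real.iSup_nonneg fun _ ↦ infDist_nonneg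

theorem infDist_le_biSup_infDist (fin : hausdorffEDist s t ≠ ⊤) {x : X} (hx : x ∈ s) :
    infDist x t ≤ ⨆ y ∈ s, infDist y t := by
  refine le_ciSup₂ (f := fun y (_ : y ∈ s) ↦ infDist y t) ⟨hausdorffDist s t, ?_⟩ x hx
  rintro _ ⟨_, ⟨y, rfl⟩, ⟨hy, rfl⟩⟩
  exact infDist_le_hausdorffDist_of_mem hy fin

theorem hausdorffDist_le_modifiedHausdorffDist (fin : hausdorffEDist s t ≠ ⊤) :
    hausdorffDist s t ≤ modifiedHausdorffDist s t := by
  have fin' : hausdorffEDist t s ≠ ⊤ := hausdorffEDist_comm.trans_ne fin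
  have hst := biSup_infDist_nonneg (s := s) (t := t)
  have hts := biSup_infDist_nonneg (s := t) (t := s)
  refine hausdorffDist_le_of_infDist (add_nonneg hst hts) (fun x hx ↦ ?_) (fun x hx ↦ ?_)
  · exact (infDist_le_biSup_infDist fin hx).trans (le_add_of_nonneg_right hts)
  · exact (infDist_le_biSup_infDist fin' hx).trans (le_add_of_nonneg_left hst)

end Metric

theorem hausdorffDist_triangle_via_subsets_general {X : Type*} [MetricSpace X]
    (A B Y W : Set X) (hAbdd : Bornology.IsBounded A) (hBbdd : Bornology.IsBounded B)
    (hYne : Y.Nonempty) (hWne : W.Nonempty)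
    (hYA : Y ⊆ A) (hWB : W ⊆ B) :
    Metric.hausdorffDist A B ≤
      Metric.hausdorffDist A Y + Metric.hausdorffDist B W + modifiedHausdorffDist Y W := by
  have hYbdd := hAbdd.subset hYA
  have hAY : Metric.hausdorffEDist A Y ≠ ⊤ :=
    Metric.hausdorffEDist_ne_top_of_nonempty_of_bounded (hYne.mono hYA) hYne hAbdd hYbdd
  have hYW : Metric.hausdorffEDist Y W ≠ ⊤ :=
    Metric.hausdorffEDist_ne_top_of_nonempty_of_bounded hYne hWne hYbdd (hBbdd.subset hWB)
  calc Metric.hausdorffDist A B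
      ≤ Metric.hausdorffDist A Y + (Metric.hausdorffDist Y W + Metric.hausdorffDist W B) := by
        grw [Metric.hausdorffDist_triangle hAY, Metric.hausdorffDist_triangle hYW]
    _ ≤ Metric.hausdorffDist A Y + Metric.hausdorffDist B W + modifiedHausdorffDist Y W := by
        rw [Metric.hausdorffDist_comm (s := W)]
        linarith [Metric.hausdorffDist_le_modifiedHausdorffDist hYW]

theorem hausdorffDist_triangle_via_subsets {X : Type*} [MetricSpace X]
    (A B Y W : Set X) (hAbdd : Bornology.IsBounded A) (hBbdd : Bornology.IsBounded B)
    (hAne : A.Nonempty) (hBne : B.Nonempty) (hYne : Y.Nonempty) (hWne : W.Nonempty)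
    (hYA : Y ⊆ A) (hWB : W ⊆ B) :
    Metric.hausdorffDist A B ≤
      Metric.hausdorffDist A Y + Metric.hausdorffDist B W + modifiedHausdorffDist Y W :=
  hausdorffDist_triangle_via_subsets_general A B Y W hAbdd hBbdd hYne hWne hYA hWB
end

section
/- Let n ≥ 1 and let x⃗ = (x₁, …, xₙ) ∈ ℝⁿ be a nonincreasing vector such that x₁ = x₂ = ⋯ = x_m > x_{m+1} ≥ ⋯ ≥ xₙ for some 1 ≤ m < n. Then for every α > 0 and every index 1 ≤ i ≤ m, |Softmax(α x⃗)_i − 1/m| ≤ ((n − m)/m²) · e^{−α(x₁ − x_{m+1})}. -/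
open Finset Real

lemma abs_div_mul_add_sub_inv_le {k a t : ℝ} (hk : 0 < k) (ha : 0 < a) (ht : 0 ≤ t) :
    |a / (k * a + t) - 1 / k| ≤ t / (k ^ 2 * a) := by
  have hpos : 0 < k * a + t := by positivity
  have hdiff : a / (k * a + t) - 1 / k = -(t / (k * (k * a + t))) := by
    field_simp
    ring
  rw [hdiff, abs_neg, abs_of_nonneg (by positivity), sq, mul_assoc]
  gcongr
  linarith

theorem abs_softmax_sub_inv_card_le {n : ℕ} (v : Fin n → ℝ) (s : Finset (Fin n)) (c d : ℝ)
    (hs : ∀ j ∈ s, v j = c) (hsc : ∀ j ∉ s, v j ≤ d) {i : Fin n} (hi : i ∈ s) :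
    |softmax v i - 1 / #s| ≤ (#sᶜ / #s ^ 2) * exp (-(c - d)) := by
  set t := ∑ j ∈ sᶜ, exp (v j)
  have hsum : ∑ j, exp (v j) = #s * exp c + t := by
    rw [← sum_add_sum_compl s, sum_congr rfl fun j hj => by rw [hs j hj], sum_const, nsmul_eq_mul]
  have ht : t ≤ #sᶜ * exp d := by
    simpa using sum_le_card_nsmul sᶜ _ _ fun j hj => exp_le_exp.2 (hsc j (mem_compl.1 hj))
  have hcard : (0 : ℝ) < #s := by exact_mod_cast card_pos.2 ⟨i, hi⟩
  calc |softmax v i - 1 / #s| ≤ t / (#s ^ 2 * exp c) := by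
        rw [softmax, hsum, hs i hi]
        exact abs_div_mul_add_sub_inv_le hcard (exp_pos c) (sum_nonneg fun j _ => (exp_pos _).le)
    _ ≤ #sᶜ * exp d / (#s ^ 2 * exp c) := by gcongr
    _ = (#sᶜ / #s ^ 2) * exp (-(c - d)) := by
        rw [neg_sub, exp_sub]
        ring

theorem softmax_max_indices_error_bound {n : ℕ} (x : Fin n → ℝ)
    (hanti : ∀ i j : Fin n, i ≤ j → x j ≤ x i)
    (m : ℕ) (hmn : m < n)
    (hconst : ∀ i : Fin n, (i : ℕ) < m → x i = x ⟨0, by omega⟩)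
    (α : ℝ) (hα : 0 < α) (i : Fin n) (hi : (i : ℕ) < m) :
    |softmax (fun j => α * x j) i - 1 / m| ≤
      (((n : ℝ) - m) / m ^ 2) * Real.exp (-α * (x ⟨0, by omega⟩ - x ⟨m, hmn⟩)) := by
  set s : Finset (Fin n) := {j | (j : ℕ) < m}
  have hcard : #s = m := by rw [Fin.card_filter_val_lt]; omega
  have hcard_compl : ((#sᶜ : ℕ) : ℝ) = n - m := by
    rw [card_compl, hcard, Fintype.card_fin, Nat.cast_sub hmn.le]
  have hbound := abs_softmax_sub_inv_card_le (fun j => α * x j) s (α * x ⟨0, by omega⟩)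
    (α * x ⟨m, hmn⟩) (fun j hj => by rw [hconst j (by simpa [s] using hj)])
    (fun j hj => mul_le_mul_of_nonneg_left
      (hanti _ _ (Fin.le_def.2 (by simpa [s] using hj))) hα.le) (by simpa [s] using hi)
  rw [neg_mul]
  rwa [hcard_compl, hcard, ← mul_sub] at hbound
end

section
/- Let θ, φ ∈ (0, π) with θ ≠ φ. Then (cos θ − cos φ)² > (1/π²) sin²θ · (θ − φ)². -/
theorem cos_diff_sq_gt_sin_sq (θ φ : ℝ) (hθ0 : 0 < θ) (hθπ : θ < Real.pi)
    (hφ0 : 0 < φ) (hφπ : φ < Real.pi) (hne : θ ≠ φ) :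
    (Real.cos θ - Real.cos φ) ^ 2 >
      (1 / Real.pi ^ 2) * Real.sin θ ^ 2 * (θ - φ) ^ 2 := by
  have hπ := Real.pi_pos
  set s := (θ + φ) / 2 with hs
  set d := (θ - φ) / 2 with hd
  have hs0 : 0 < s := by rw [hs]; linarith
  have hsπ : s < Real.pi := by rw [hs]; linarith
  have hsin_s : 0 < Real.sin s := Real.sin_pos_of_pos_of_lt_pi hs0 hsπ
  have hsinφ : 0 < Real.sin φ := Real.sin_pos_of_pos_of_lt_pi hφ0 hφπ
  have hsinθ : 0 < Real.sin θ := Real.sin_pos_of_pos_of_lt_pi hθ0 hθπ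
  have hdlt : |d| < Real.pi / 2 := by
    rw [abs_lt, hd]; constructor <;> linarith
  have hdpos : 0 < |d| := abs_pos.mpr (by rw [hd]; intro h; apply hne; linarith [sub_eq_zero.mp (by linarith : θ - φ = 0)])
  have jordan : 2 / Real.pi * |d| ≤ Real.sin |d| :=
    Real.mul_le_sin hdpos.le hdlt.le
  have hcosd1 : Real.cos d ≤ 1 := Real.cos_le_one d
  have hcosd0 : 0 < Real.cos d := Real.cos_pos_of_mem_Ioo ⟨by linarith [abs_lt.mp hdlt], by linarith [abs_lt.mp hdlt]⟩
  have hsum : Real.sin θ + Real.sin φ = 2 * Real.sin s * Real.cos d := by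
    rw [show θ = s + d by rw [hs, hd]; ring, show φ = s - d by rw [hs, hd]; ring,
      Real.sin_add, Real.sin_sub]; ring
  have habs_sin : |Real.sin d| = Real.sin |d| := by
    rcases le_or_gt 0 d with h | h
    · rw [abs_of_nonneg h, abs_of_nonneg (Real.sin_nonneg_of_nonneg_of_le_pi h (by linarith [abs_lt.mp hdlt, abs_of_nonneg h]))]
    · rw [abs_of_neg h, abs_of_neg (Real.sin_neg_of_neg_of_neg_pi_lt h (by linarith [abs_lt.mp hdlt, abs_of_neg h])), Real.sin_neg]
  have hA : |Real.cos θ - Real.cos φ| = 2 * Real.sin s * Real.sin |d| := by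
    rw [Real.cos_sub_cos, ← hs, ← hd, abs_mul, abs_mul, habs_sin,
      abs_of_pos hsin_s]
    norm_num
  have h2d : |θ - φ| = 2 * |d| := by
    rw [show θ - φ = 2 * d by rw [hd]; ring, abs_mul]; norm_num
  have key : 1 / Real.pi * Real.sin θ * |θ - φ| < |Real.cos θ - Real.cos φ| := by
    rw [hA, h2d]
    have hθlt : Real.sin θ < 2 * Real.sin s * Real.cos d := by nlinarith
    have j2 : 2 * |d| ≤ Real.pi * Real.sin |d| := by
      rw [div_mul_eq_mul_div, div_le_iff₀ hπ] at jordan; linarith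
    have hsind0 : 0 < Real.sin |d| := Real.sin_pos_of_pos_of_lt_pi hdpos (by linarith)
    rw [div_mul_eq_mul_div, div_mul_eq_mul_div, div_lt_iff₀ hπ]
    nlinarith [mul_pos hsin_s hdpos, mul_pos hsin_s hsind0]
  have hB : 0 ≤ 1 / Real.pi * Real.sin θ * |θ - φ| := by positivity
  have := pow_lt_pow_left₀ key hB two_ne_zero
  calc (1 / Real.pi ^ 2) * Real.sin θ ^ 2 * (θ - φ) ^ 2
      = (1 / Real.pi * Real.sin θ * |θ - φ|) ^ 2 := by
        rw [mul_pow, mul_pow, sq_abs]; ring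
    _ < |Real.cos θ - Real.cos φ| ^ 2 := this
    _ = (Real.cos θ - Real.cos φ) ^ 2 := sq_abs _
end
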